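/- If A is a toral algebraic set in ℂ^n, then A is 𝕋^n-symmetric, i.e., for every ζ ∈ A all of whose coordinates are nonzero, the point (1/conj(ζ_1), …, 1/conj(ζ_n)) also lies in A. -/

import Mathlib

open MvPolynomial

noncomputable section

/-- The `n`-torus `𝕋ⁿ ⊆ ℂⁿ`. -/
def torus (n : ℕ) : Set (Fin n → ℂ) := {z | ∀ i, ‖z i‖ = 1}

/-- The open unit polydisk `𝔻ⁿ ⊆ ℂⁿ`. -/
def polydisk (n : ℕ) : Set (Fin n → ℂ) := {z | ∀ i, ‖z i‖ < 1}

/-- `𝔼ⁿ`, the product of the exteriors of the closed unit disk. -/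
def polyExt (n : ℕ) : Set (Fin n → ℂ) := {z | ∀ i, 1 < ‖z i‖}

/-- The zero set `Z_p ⊆ ℂⁿ` of a polynomial `p ∈ ℂ[z₁,…,zₙ]`. -/
def zeroSet {n : ℕ} (p : MvPolynomial (Fin n) ℂ) : Set (Fin n → ℂ) :=
  {z | eval z p = 0}

/-- An algebraic set in `ℂⁿ` is a finite intersection of zero sets of polynomials. -/
def IsAlgebraicSet {n : ℕ} (A : Set (Fin n → ℂ)) : Prop :=
  ∃ S : Finset (MvPolynomial (Fin n) ℂ), A = ⋂ p ∈ S, zeroSet p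

/-- `f` belongs to `Hol(A)`: at every point of `A`, `f` agrees on `A` with a function
holomorphic on an open neighborhood in `ℂⁿ`. -/
def HolOn {n : ℕ} (A : Set (Fin n → ℂ)) (f : (Fin n → ℂ) → ℂ) : Prop :=
  ∀ x ∈ A, ∃ U : Set (Fin n → ℂ), IsOpen U ∧ x ∈ U ∧
    ∃ g : (Fin n → ℂ) → ℂ, DifferentiableOn ℂ g U ∧ Set.EqOn g f (U ∩ A)

/-- `X` is determining for `A`: the only `f ∈ Hol(A)` vanishing on `X ∩ A` vanishes on `A`. -/
def IsDetermining {n : ℕ} (X A : Set (Fin n → ℂ)) : Prop :=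
  ∀ f : (Fin n → ℂ) → ℂ, HolOn A f → (∀ z ∈ X ∩ A, f z = 0) → ∀ z ∈ A, f z = 0

/-- A variety: an algebraic set that is not a finite union of strictly smaller algebraic sets. -/
def IsVariety {n : ℕ} (V : Set (Fin n → ℂ)) : Prop :=
  IsAlgebraicSet V ∧
    ¬ ∃ (m : ℕ) (B : Fin m → Set (Fin n → ℂ)),
        (∀ i, IsAlgebraicSet (B i) ∧ B i ⊂ V) ∧ V = ⋃ i, B i

/-- `C` is an irreducible component of `A`: `A` is a finite union of varieties,
none containing another, one of which is `C`. -/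
def IsIrredComponent {n : ℕ} (C A : Set (Fin n → ℂ)) : Prop :=
  ∃ (m : ℕ) (V : Fin m → Set (Fin n → ℂ)),
    (∀ i, IsVariety (V i)) ∧
    (∀ i j, i ≠ j → ¬ V i ⊆ V j) ∧
    A = ⋃ i, V i ∧ ∃ i, C = V i

/-- A toral algebraic set: an algebraic set for which `𝕋ⁿ` is determining. -/
def IsToral {n : ℕ} (A : Set (Fin n → ℂ)) : Prop :=
  IsAlgebraicSet A ∧ IsDetermining (torus n) A

/-- An atoral algebraic set: an algebraic set none of whose irreducible components
has `𝕋ⁿ` determining for it. -/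
def IsAtoral {n : ℕ} (A : Set (Fin n → ℂ)) : Prop :=
  IsAlgebraicSet A ∧ ∀ C, IsIrredComponent C A → ¬ IsDetermining (torus n) C

/-- A toral polynomial. -/
def IsToralPoly {n : ℕ} (p : MvPolynomial (Fin n) ℂ) : Prop := IsToral (zeroSet p)

/-- An atoral polynomial. -/
def IsAtoralPoly {n : ℕ} (p : MvPolynomial (Fin n) ℂ) : Prop := IsAtoral (zeroSet p)

/-- The reflection `p^~(z) = z^d ⬝ conj (p (1/z̄))`, where `d` is the multidegree of `p`:
the coefficient of `z^a` in `p` becomes, conjugated, the coefficient of `z^{d-a}`. -/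
def reflectPoly {n : ℕ} (p : MvPolynomial (Fin n) ℂ) : MvPolynomial (Fin n) ℂ :=
  ∑ a ∈ p.support,
    monomial (Finsupp.equivFunOnFinite.symm fun i => p.degreeOf i - a i)
      (starRingEnd ℂ (p.coeff a))

/-- Two polynomials are relatively prime if every common divisor is a unit. -/
def RelPrimePoly {n : ℕ} (a b : MvPolynomial (Fin n) ℂ) : Prop :=
  ∀ d : MvPolynomial (Fin n) ℂ, d ∣ a → d ∣ b → IsUnit d

/-- The set of isolated points of `A`. -/
def isolatedPoints {n : ℕ} (A : Set (Fin n → ℂ)) : Set (Fin n → ℂ) :=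
  {x | x ∈ A ∧ ∃ U : Set (Fin n → ℂ), IsOpen U ∧ x ∈ U ∧ U ∩ A = {x}}

lemma diff_eval' {n : ℕ} (p : MvPolynomial (Fin n) ℂ) :
    Differentiable ℂ (fun z : Fin n → ℂ => eval z p) := by
  induction p using MvPolynomial.induction_on with
  | C a => simp only [eval_C]; exact differentiable_const a
  | add p q hp hq => simp only [map_add]; exact hp.add hq
  | mul_X p i hp =>
      simp only [map_mul, eval_X]; exact hp.mul ((ContinuousLinearMap.proj i : (Fin n → ℂ) →L[ℂ] ℂ)).differentiable

lemma eval_reflect' {n : ℕ} (p : MvPolynomial (Fin n) ℂ) (z : Fin n → ℂ)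
    (hz : ∀ i, z i ≠ 0) :
    eval z (reflectPoly p) =
      (∏ i, z i ^ p.degreeOf i) *
        starRingEnd ℂ (eval (fun i => (starRingEnd ℂ (z i))⁻¹) p) := by
  rw [reflectPoly, eval_sum, MvPolynomial.eval_eq', map_sum, Finset.mul_sum]
  apply Finset.sum_congr rfl
  intro a ha
  rw [eval_monomial, Finsupp.prod_fintype _ _ (fun i => pow_zero _)]
  simp only [map_mul, map_prod, map_pow, map_inv₀, Complex.conj_conj,
    Finsupp.coe_equivFunOnFinite_symm]
  rw [mul_left_comm, ← Finset.prod_mul_distrib]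
  congr 1
  apply Finset.prod_congr rfl
  intro i _
  rw [pow_sub₀ (z i) (hz i) (MvPolynomial.monomial_le_degreeOf i ha), inv_pow]

/-- A toral algebraic set `A ⊆ ℂⁿ` is `𝕋ⁿ`-symmetric: if `ζ ∈ A` has all
coordinates nonzero, then `(1/ζ̄₁, …, 1/ζ̄ₙ) ∈ A`. -/
theorem statement4 {n : ℕ} (A : Set (Fin n → ℂ)) (hA : IsToral A) :
    ∀ ζ ∈ A, (∀ i, ζ i ≠ 0) → (fun i => (starRingEnd ℂ (ζ i))⁻¹) ∈ A := by
  intro ζ hζ hζ0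
  obtain ⟨⟨S, hS⟩, hdet⟩ := hA
  rw [hS]
  simp only [Set.mem_iInter]
  intro p hp
  -- apply determining to the reflected polynomial
  have hvan : ∀ z ∈ torus n ∩ A, eval z (reflectPoly p) = 0 := by
    intro z ⟨hzt, hzA⟩
    have hz0 : ∀ i, z i ≠ 0 := fun i h => by
      have := hzt i; rw [h] at this; simp at this
    rw [eval_reflect' p z hz0]
    have hfix : (fun i => (starRingEnd ℂ (z i))⁻¹) = z := by
      funext i
      have h1 : (z i)⁻¹ = starRingEnd ℂ (z i) := Complex.inv_eq_conj (hzt i)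
      rw [← h1, inv_inv]
    rw [hfix]
    have : eval z p = 0 := by
      have := hS ▸ hzA
      simp only [Set.mem_iInter] at this
      exact this p hp
    simp [this]
  have hHol : HolOn A (fun z => eval z (reflectPoly p)) := by
    intro x _
    exact ⟨Set.univ, isOpen_univ, Set.mem_univ x,
      fun z => eval z (reflectPoly p), (diff_eval' _).differentiableOn, fun _ _ => rfl⟩
  have h0 : eval ζ (reflectPoly p) = 0 := hdet _ hHol hvan ζ hζ
  rw [eval_reflect' p ζ hζ0] at h0
  have hprod : (∏ i, ζ i ^ p.degreeOf i) ≠ 0 :=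
    Finset.prod_ne_zero_iff.mpr fun i _ => pow_ne_zero _ (hζ0 i)
  have := (mul_eq_zero.mp h0).resolve_left hprod
  have : eval (fun i => (starRingEnd ℂ (ζ i))⁻¹) p = 0 := by
    have := congrArg (starRingEnd ℂ) this
    simpa using this
  exact this
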